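/- (Shift lemma on a monotonic path.) Let (x, y, t) : Θ^A → X × Y × ℝ be a measurable mechanism that is IC and IR on the path. Define the shifted mechanism by x̃ = x, ỹ(θ^A) = y₀ for all θ^A, and t̃(θ^A) = t(θ^A) − u^B(y(θ^A), h(θ^A)). Then (x̃, ỹ, t̃) satisfies all downward IC constraints (the IC inequalities for θ^A > θ̂^A) and all IR constraints; moreover, for any Borel probability measure on Θ^A, the principal's expected payoff under (x̃, ỹ, t̃) with truthful reporting is at least that under (x, y, t), and strictly greater if the instruments are strictly costly and the event {y(θ^A) ≠ y₀} has positive probability. -/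

import Mathlib

/-!
The shift replaces the costly instrument by the null instrument and compensates the agent
through the transfer, so the agent's truthful payoff, hence IR, is unchanged. A downward
deviation of `a` to `a' < a` now pays `a` only `uB (y a') (h a')` instead of
`uB (y a') (h a)`, which is no more since `uB` is nondecreasing in the type. The principal
gains pointwise the lost surplus `-(uB + vB) ≥ 0`, and strictly so wherever a strictly
costly instrument was used.
-/

open MeasureTheory Set

noncomputable section

theorem shifted_ic_of_ic_of_le {Θ X Y B : Type*} [Preorder B] {uA : X → Θ → ℝ}
    {uB : Y → B → ℝ} {h : Θ → B} {x : Θ → X} {y : Θ → Y} {t : Θ → ℝ} {a a' : Θ} (c : ℝ)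
    (hIC : uA (x a) a + uB (y a) (h a) - t a ≥ uA (x a') a + uB (y a') (h a) - t a')
    (huB : Monotone (uB (y a'))) (hle : h a' ≤ h a) :
    uA (x a) a + c - (t a - uB (y a) (h a)) ≥ uA (x a') a + c - (t a' - uB (y a') (h a')) := by
  linarith [huB hle]

theorem integrable_comp_of_abs_le {α β : Type*} [MeasurableSpace α] [MeasurableSpace β]
    {μ : Measure α} [IsFiniteMeasure μ] {F : β → ℝ} (hF : Measurable F) {M : ℝ}
    (hM : ∀ b, |F b| ≤ M) {g : α → β} (hg : Measurable g) : Integrable (F ∘ g) μ :=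
  Integrable.of_bound (hF.comp hg).aestronglyMeasurable M (ae_of_all _ fun a => hM (g a))

theorem integral_neg_of_nonpos_of_neg_on {α : Type*} [MeasurableSpace α] {μ : Measure α}
    {f : α → ℝ} (hf : f ≤ 0) (hint : Integrable f μ) {s : Set α} (hs : μ s ≠ 0)
    (hneg : ∀ a ∈ s, f a < 0) : ∫ a, f a ∂μ < 0 := by
  have hsupp : s ⊆ Function.support (-f) := fun a ha => by
    simpa using (hneg a ha).ne
  have hpos : 0 < ∫ a, (-f) a ∂μ :=
    (integral_pos_iff_support_of_nonneg (neg_nonneg.mpr hf) hint.neg).mpr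
      (pos_iff_ne_zero.mpr fun h0 => hs (measure_mono_null hsupp h0))
  simpa [integral_neg] using hpos

theorem stmt13
    (N : ℕ) (Y : Type) [MeasurableSpace Y] (y₀ : Y)
    (ΘA : Set ℝ)
    (h : ℝ → (Fin N → ℝ)) (hhmeas : Measurable h)
    (hhmono : ∀ a ∈ ΘA, ∀ a' ∈ ΘA, a ≤ a' → h a ≤ h a')
    (uA vA : ℝ → ℝ → ℝ)
    (uB vB : Y → (Fin N → ℝ) → ℝ)
    (huBmeas : Measurable (fun p : Y × (Fin N → ℝ) => uB p.1 p.2))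
    (hvBmeas : Measurable (fun p : Y × (Fin N → ℝ) => vB p.1 p.2))
    (huBbdd : ∃ M, ∀ y b, |uB y b| ≤ M)
    (hvBbdd : ∃ M, ∀ y b, |vB y b| ≤ M)
    (huBmono : ∀ y : Y, Monotone (uB y))
    (hsB : ∀ y b, uB y b + vB y b ≤ 0)
    (huB0 : ∀ b, uB y₀ b = 0) (hvB0 : ∀ b, vB y₀ b = 0)
    -- a mechanism on the path, IC and IR
    (x : ℝ → ℝ) (y : ℝ → Y) (t : ℝ → ℝ)
    (hymeas : Measurable y)
    (hIC : ∀ a ∈ ΘA, ∀ a' ∈ ΘA,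
      uA (x a) a + uB (y a) (h a) - t a ≥ uA (x a') a + uB (y a') (h a) - t a')
    (hIR : ∀ a ∈ ΘA, uA (x a) a + uB (y a) (h a) - t a ≥ 0) :
    -- the shifted mechanism (x, ỹ ≡ y₀, t̃ = t − uB(y·, h·)) satisfies all
    -- downward IC constraints …
    (∀ a ∈ ΘA, ∀ a' ∈ ΘA, a' < a →
      uA (x a) a + uB y₀ (h a) - (t a - uB (y a) (h a)) ≥
        uA (x a') a + uB y₀ (h a) - (t a' - uB (y a') (h a'))) ∧
    -- … and all IR constraints …
    (∀ a ∈ ΘA, uA (x a) a + uB y₀ (h a) - (t a - uB (y a) (h a)) ≥ 0) ∧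
    -- … and weakly improves the principal's payoff for any type distribution on the
    -- path, strictly so when the instruments are strictly costly and used with
    -- positive probability
    (∀ μ : Measure ℝ, IsProbabilityMeasure μ → μ ΘAᶜ = 0 →
      Integrable (fun a => vA (x a) a + vB (y a) (h a) + t a) μ →
      (∫ a, (vA (x a) a + vB y₀ (h a) + (t a - uB (y a) (h a))) ∂μ ≥
        ∫ a, (vA (x a) a + vB (y a) (h a) + t a) ∂μ) ∧
      ((∀ y' : Y, y' ≠ y₀ → ∀ b, uB y' b + vB y' b < 0) →
        μ {a | y a ≠ y₀} ≠ 0 →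
        ∫ a, (vA (x a) a + vB y₀ (h a) + (t a - uB (y a) (h a))) ∂μ >
          ∫ a, (vA (x a) a + vB (y a) (h a) + t a) ∂μ)) := by
  obtain ⟨Mu, hMu⟩ := huBbdd
  obtain ⟨Mv, hMv⟩ := hvBbdd
  refine ⟨fun a ha a' ha' hlt => shifted_ic_of_ic_of_le _ (hIC a ha a' ha') (huBmono _)
      (hhmono a' ha' a ha hlt.le),
    fun a ha => by linarith [hIR a ha, huB0 (h a)], fun μ _ _ hint => ?_⟩
  set surplus : ℝ → ℝ := fun a => uB (y a) (h a) + vB (y a) (h a)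
  have hsurplus : Integrable surplus μ :=
    integrable_comp_of_abs_le (huBmeas.add hvBmeas) (M := Mu + Mv)
      (fun p => (abs_add_le _ _).trans (add_le_add (hMu _ _) (hMv _ _)))
      (hymeas.prodMk hhmeas)
  have hpayoff : ∫ a, (vA (x a) a + vB y₀ (h a) + (t a - uB (y a) (h a))) ∂μ =
      (∫ a, (vA (x a) a + vB (y a) (h a) + t a) ∂μ) - ∫ a, surplus a ∂μ := by
    rw [← integral_sub hint hsurplus]
    congr 1 with a
    simp only [surplus, hvB0]
    ring
  refine ⟨by linarith [integral_nonpos (μ := μ) fun a => hsB (y a) (h a)], fun hstrict hused => ?_⟩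
  linarith [integral_neg_of_nonpos_of_neg_on (fun a => hsB (y a) (h a)) hsurplus hused
    fun a ha => hstrict (y a) ha (h a)]
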